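/- Let 0 < a < 1 and set g(w) = 1 - e^{-w} - w^a·γ(1-a,w) and η = (1-a)/a. Define v(u) = 1 - 2·exp(c·g(u)) + exp(-c·u/η) for c > 0 and u > 0. Then for all c > 0 and all u ∈ (0,1], v(u) ≥ (1 - exp(-c·u/(2η)))² > 0. -/

import Mathlib

/-- Lower incomplete gamma function γ(s,x) = ∫₀^x t^(s-1) e^(-t) dt. -/
noncomputable def lowerGamma (s x : ℝ) : ℝ := ∫ t in (0:ℝ)..x, t ^ (s - 1) * Real.exp (-t)

/-- g(w) = 1 - e^(-w) - w^a·γ(1-a, w). -/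
noncomputable def gFun (a w : ℝ) : ℝ := 1 - Real.exp (-w) - w ^ a * lowerGamma (1 - a) w

/-- v(u) = 1 - 2·exp(c·g(u)) + exp(-c·u/η). -/
noncomputable def vFun (a η c u : ℝ) : ℝ :=
  1 - 2 * Real.exp (c * gFun a u) + Real.exp (-(c * u / η))

lemma aux_intble (r : ℝ) (hr : -1 < r) (w : ℝ) :
    IntervalIntegrable (fun t => t ^ r * Real.exp (-t)) MeasureTheory.volume 0 w :=
  (intervalIntegral.intervalIntegrable_rpow' hr).mul_continuousOn
    ((Real.continuous_exp.comp continuous_neg).continuousOn)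

lemma g_bound (a : ℝ) (ha : 0 < a) (ha1 : a < 1) (w : ℝ) (hw : 0 < w) (hw1 : w ≤ 1) :
    gFun a w ≤ -(a * w / (2 * (1 - a))) := by
  have h1a : (0:ℝ) < 1 - a := by linarith
  have h2a : (0:ℝ) < 2 - a := by linarith
  have hexpint : (1 : ℝ) - Real.exp (-w) = ∫ t in (0:ℝ)..w, Real.exp (-t) := by
    have := intervalIntegral.integral_comp_neg (a := 0) (b := w) (fun t => Real.exp t)
    simp [Real.exp_neg] at this ⊢
    exact this.symm
  have hgam : w ^ a * lowerGamma (1 - a) w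
      = ∫ t in (0:ℝ)..w, w ^ a * (t ^ (-a) * Real.exp (-t)) := by
    rw [lowerGamma, show (1 - a) - 1 = -a by ring, ← intervalIntegral.integral_const_mul]
  have hint1 : IntervalIntegrable (fun t => Real.exp (-t)) MeasureTheory.volume 0 w :=
    ((Real.continuous_exp.comp continuous_neg).intervalIntegrable 0 w)
  have hint2 : IntervalIntegrable (fun t => w ^ a * (t ^ (-a) * Real.exp (-t)))
      MeasureTheory.volume 0 w :=
    (aux_intble (-a) (by linarith) w).const_mul _
  have hg : gFun a w = ∫ t in (0:ℝ)..w,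
      (Real.exp (-t) - w ^ a * (t ^ (-a) * Real.exp (-t))) := by
    rw [gFun, hexpint, hgam, ← intervalIntegral.integral_sub hint1 hint2]
  -- integrability of the majorant
  have hint3 : IntervalIntegrable
      (fun t => (1 - t) - w ^ a * t ^ (-a) + w ^ a * t ^ (1 - a))
      MeasureTheory.volume 0 w := by
    apply IntervalIntegrable.add
    · apply IntervalIntegrable.sub
      · exact (continuous_const.sub continuous_id).intervalIntegrable 0 w
      · exact (intervalIntegral.intervalIntegrable_rpow' (by linarith)).const_mul _
    · exact (intervalIntegral.intervalIntegrable_rpow' (by linarith : (-1:ℝ) < 1 - a)).const_mul _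
  -- pointwise bound
  have hmono : gFun a w ≤ ∫ t in (0:ℝ)..w,
      ((1 - t) - w ^ a * t ^ (-a) + w ^ a * t ^ (1 - a)) := by
    rw [hg]
    apply intervalIntegral.integral_mono_on hw.le (hint1.sub hint2) hint3
    intro t ht
    obtain ⟨ht0, htw⟩ := ht
    rcases eq_or_lt_of_le ht0 with h0 | h0
    · simp [← h0, Real.zero_rpow (by linarith : -a ≠ 0),
        Real.zero_rpow (by linarith : 1 - a ≠ 0)]
    · have hta : t ^ (1 - a) = t * t ^ (-a) := by
        rw [show (1 : ℝ) - a = 1 + (-a) by ring, Real.rpow_add h0, Real.rpow_one]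
      have hA : 1 ≤ w ^ a * t ^ (-a) := by
        have h1 : t ^ a ≤ w ^ a := Real.rpow_le_rpow h0.le htw ha.le
        have h2 : (0:ℝ) < t ^ a := Real.rpow_pos_of_pos h0 a
        rw [Real.rpow_neg h0.le, ← div_eq_mul_inv]
        exact (one_le_div h2).mpr h1
      have hE : 1 - t ≤ Real.exp (-t) := by
        have := Real.add_one_le_exp (-t)
        linarith
      have hE0 : 0 ≤ Real.exp (-t) := (Real.exp_pos _).le
      rw [hta]
      nlinarith [mul_nonneg (sub_nonneg.mpr hE) (sub_nonneg.mpr hA)]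
  -- compute the majorant integral
  have e1 : (∫ t in (0:ℝ)..w, (1 - t)) = w - w^2/2 := by
    rw [intervalIntegral.integral_sub intervalIntegrable_const intervalIntegral.intervalIntegrable_id,
      intervalIntegral.integral_const, integral_id]
    norm_num [smul_eq_mul]
  have e2 : (∫ t in (0:ℝ)..w, t ^ (-a)) = w ^ (1-a) / (1-a) := by
    rw [integral_rpow (Or.inl (by linarith))]
    rw [Real.zero_rpow (by linarith : -a + 1 ≠ 0), show -a+1 = 1-a by ring]
    ring
  have e3 : (∫ t in (0:ℝ)..w, t ^ (1-a)) = w ^ (2-a) / (2-a) := by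
    rw [integral_rpow (Or.inl (by linarith))]
    rw [Real.zero_rpow (by linarith : 1-a+1 ≠ 0), show 1-a+1 = 2-a by ring]
    ring
  have hw1a : w ^ a * w ^ (1-a) = w := by
    rw [← Real.rpow_add hw]; norm_num
  have hw2a : w ^ a * w ^ (2-a) = w^2 := by
    rw [← Real.rpow_add hw, show a+(2-a)=((2:ℕ):ℝ) by push_cast; ring, Real.rpow_natCast]
  have hval : (∫ t in (0:ℝ)..w, ((1 - t) - w ^ a * t ^ (-a) + w ^ a * t ^ (1 - a)))
      = (w - w^2/2) - w/(1-a) + w^2/(2-a) := by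
    have i1 : IntervalIntegrable (fun t : ℝ => 1 - t) MeasureTheory.volume 0 w :=
      Continuous.intervalIntegrable (by continuity) 0 w
    have i2 : IntervalIntegrable (fun t : ℝ => w ^ a * t ^ (-a)) MeasureTheory.volume 0 w :=
      (intervalIntegral.intervalIntegrable_rpow' (by linarith : (-1:ℝ) < -a)).const_mul _
    have i3 : IntervalIntegrable (fun t : ℝ => w ^ a * t ^ (1-a)) MeasureTheory.volume 0 w :=
      (intervalIntegral.intervalIntegrable_rpow' (by linarith : (-1:ℝ) < 1 - a)).const_mul _
    rw [intervalIntegral.integral_add (i1.sub i2) i3, intervalIntegral.integral_sub i1 i2,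
      intervalIntegral.integral_const_mul, intervalIntegral.integral_const_mul, e1, e2, e3,
      mul_div_assoc', mul_div_assoc', hw1a, hw2a]
  have harith : (w - w^2/2) - w/(1-a) + w^2/(2-a) ≤ -(a * w / (2 * (1 - a))) := by
    rw [← sub_nonneg]
    have h3 : (0:ℝ) < 2 - a - w * (1-a) := by nlinarith
    have key : 0 ≤ a * w * (2 - a - w * (1-a)) :=
      mul_nonneg (mul_nonneg ha.le hw.le) h3.le
    have hrw : -(a * w / (2 * (1 - a))) - ((w - w^2/2) - w/(1-a) + w^2/(2-a))
        = (a * w * (2 - a - w * (1-a))) / (2 * (1-a) * (2-a)) := by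
      field_simp
      ring
    rw [hrw]
    exact div_nonneg key (by positivity)
  calc gFun a w ≤ _ := hmono
    _ = _ := hval
    _ ≤ _ := harith

theorem vFun_pos_on_unit (a η : ℝ) (ha : 0 < a) (ha1 : a < 1) (hη : η = (1 - a) / a) :
    ∀ c : ℝ, 0 < c → ∀ u : ℝ, 0 < u → u ≤ 1 →
      (1 - Real.exp (-(c * u / (2 * η)))) ^ 2 ≤ vFun a η c u ∧
      0 < (1 - Real.exp (-(c * u / (2 * η)))) ^ 2 := by
  intro c hc u hu hu1
  have h1a : (0:ℝ) < 1 - a := by linarith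
  have hη0 : 0 < η := by rw [hη]; positivity
  have hg : gFun a u ≤ -(u / (2 * η)) := by
    have h := g_bound a ha ha1 u hu hu1
    have : -(u / (2 * η)) = -(a * u / (2 * (1 - a))) := by
      rw [hη]; field_simp
    rw [this]; exact h
  have hexp : Real.exp (c * gFun a u) ≤ Real.exp (-(c * u / (2 * η))) := by
    apply Real.exp_le_exp.mpr
    have := mul_le_mul_of_nonneg_left hg hc.le
    calc c * gFun a u ≤ c * -(u / (2 * η)) := this
      _ = -(c * u / (2 * η)) := by ring
  have hsq : Real.exp (-(c * u / η)) = Real.exp (-(c * u / (2 * η))) ^ 2 := by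
    rw [sq, ← Real.exp_add]
    congr 1
    field_simp
    ring
  have hlt1 : Real.exp (-(c * u / (2 * η))) < 1 := by
    apply Real.exp_lt_one_iff.mpr
    have : 0 < c * u / (2 * η) := by positivity
    linarith
  constructor
  · rw [vFun, hsq]; nlinarith [hexp]
  · have : 0 < 1 - Real.exp (-(c * u / (2 * η))) := by linarith
    positivity
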